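/- Let (R, m) be a Noetherian local ring that is not m-adically complete, with residue field k = R/m. Then the quotient map f : R → k is not a flat cover, but its Matlis dual f^∨ : k^∨ → R^∨, which is the map k → E(k), is an injective envelope. -/

import Mathlib

universe u

variable (R : Type u) [CommRing R]

/-- A morphism `f : F → M` with `F` flat is a flat precover if every morphism from a
flat module to `M` factors through `f`. -/
def IsFlatPrecover {F M : Type u} [AddCommGroup F] [AddCommGroup M] [Module R F]
    [Module R M] (f : F →ₗ[R] M) : Prop :=
  Module.Flat R F ∧
    ∀ (F' : Type u) [AddCommGroup F'] [Module R F'], Module.Flat R F' →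
      ∀ g : F' →ₗ[R] M, ∃ h : F' →ₗ[R] F, f ∘ₗ h = g

/-- A flat precover `f : F → M` is a flat cover if every `h : F → F` with `f ∘ h = f`
is an automorphism. -/
def IsFlatCover {F M : Type u} [AddCommGroup F] [AddCommGroup M] [Module R F]
    [Module R M] (f : F →ₗ[R] M) : Prop :=
  IsFlatPrecover R f ∧ ∀ h : F →ₗ[R] F, f ∘ₗ h = f → Function.Bijective h

/-- A morphism `i : M → E` is an injective envelope if `E` is injective, `i` is
injective, and the image of `i` is an essential submodule of `E`. -/
def IsInjectiveEnvelope {M E : Type u} [AddCommGroup M] [AddCommGroup E] [Module R M]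
    [Module R E] (i : M →ₗ[R] E) : Prop :=
  Module.Injective R E ∧ Function.Injective i ∧
    ∀ N : Submodule R E, N ≠ ⊥ → N ⊓ LinearMap.range i ≠ ⊥

/-- An injective cogenerator is an injective module `E` such that `Hom(N, E) ≠ 0`
for every nonzero module `N`. -/
def IsInjectiveCogenerator (E : Type u) [AddCommGroup E] [Module R E] : Prop :=
  Module.Injective R E ∧
    ∀ (N : Type u) [AddCommGroup N] [Module R N], (∃ x : N, x ≠ 0) →
      ∃ g : N →ₗ[R] E, g ≠ 0

/-- Given a module `D` (to be thought of as `⊕ E(R/𝔫)`, the direct sum of injective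
envelopes of the residue fields of all maximal ideals, so that `Hom_R(-, D)` is the
Matlis dual), a module `M` is Matlis reflexive if the evaluation map
`M → Hom_R(Hom_R(M, D), D)` is an isomorphism. -/
def IsMatlisReflexive (D : Type u) [AddCommGroup D] [Module R D]
    (M : Type u) [AddCommGroup M] [Module R M] : Prop :=
  Function.Bijective (LinearMap.applyₗ : M →ₗ[R] ((M →ₗ[R] D) →ₗ[R] D))

/-!
Since `R` is Noetherian, its `𝔪`-adic completion `R̂` is flat, and `R → R̂ → R/𝔪` is the quotient
map. If `R → R/𝔪` were a flat cover, `R̂ → R/𝔪` would lift to `h : R̂ → R`; then `h ∘ (R → R̂)`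
lies over the identity of `R/𝔪`, so it is an automorphism and `R` is a retract of the complete
module `R̂`, hence complete.

Evaluation at `1` identifies `Hom(R, E(k))` with `E(k)`; under it the image of
`Hom(k, E(k)) → Hom(R, E(k))` contains the image of `k → E(k)`, so it is essential as well.
-/

section

variable {R}

theorem SModEq.map_smul_top {M N : Type*} [AddCommGroup M] [Module R M]
    [AddCommGroup N] [Module R N] {I : Ideal R} {x y : M}
    (hxy : x ≡ y [SMOD (I • ⊤ : Submodule R M)]) (f : M →ₗ[R] N) :
    f x ≡ f y [SMOD (I • ⊤ : Submodule R N)] :=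
  (hxy.map f).mono (Submodule.map_le_iff_le_comap.mpr (Submodule.smul_top_le_comap_smul_top I f))

theorem IsAdicComplete.of_leftInverse {M N : Type*} [AddCommGroup M] [Module R M]
    [AddCommGroup N] [Module R N] {I : Ideal R} [IsAdicComplete I M]
    (i : N →ₗ[R] M) (s : M →ₗ[R] N) (hs : Function.LeftInverse s i) : IsAdicComplete I N where
  haus' x hx := by
    have hix : i x = 0 :=
      IsHausdorff.haus inferInstance (i x) fun n ↦ by simpa using (hx n).map_smul_top i
    rw [← hs x, hix, map_zero]
  prec' f hf := by
    obtain ⟨L, hL⟩ := IsPrecomplete.prec inferInstance (f := fun n ↦ i (f n))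
      fun hmn ↦ (hf hmn).map_smul_top i
    exact ⟨s L, fun n ↦ by simpa only [hs (f n)] using (hL n).map_smul_top s⟩

theorem IsFlatCover.exists_leftInverse {F F' M : Type u} [AddCommGroup F] [Module R F]
    [AddCommGroup F'] [Module R F'] [AddCommGroup M] [Module R M] {f : F →ₗ[R] M}
    (hf : IsFlatCover R f) [Module.Flat R F'] (g : F' →ₗ[R] M) (i : F →ₗ[R] F')
    (hgi : g ∘ₗ i = f) : ∃ s : F' →ₗ[R] F, Function.LeftInverse s i := by
  obtain ⟨⟨-, hlift⟩, hcover⟩ := hf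
  obtain ⟨h, hh⟩ := hlift F' inferInstance g
  have hbij : Function.Bijective (h ∘ₗ i) := hcover _ (by rw [← LinearMap.comp_assoc, hh, hgi])
  let e := LinearEquiv.ofBijective _ hbij
  exact ⟨e.symm.toLinearMap ∘ₗ h, fun x ↦ e.symm_apply_apply x⟩

theorem isAdicComplete_of_isFlatCover_mkQ [IsNoetherianRing R] (I : Ideal R)
    (hI : IsFlatCover R I.mkQ) : IsAdicComplete I R := by
  have : Module.Flat R (AdicCompletion I R) := AdicCompletion.flat_of_isNoetherian I
  obtain ⟨s, hs⟩ := hI.exists_leftInverse (AdicCompletion.evalOneₐ I).toLinearMap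
    (AdicCompletion.of I R) (LinearMap.ext fun _ ↦ rfl)
  have : IsAdicComplete I (AdicCompletion I R) :=
    AdicCompletion.isAdicComplete (IsNoetherian.noetherian I)
  exact .of_leftInverse _ s hs

namespace IsInjectiveEnvelope

variable {M E E' : Type u} [AddCommGroup M] [Module R M] [AddCommGroup E] [Module R E]
  [AddCommGroup E'] [Module R E'] {i : M →ₗ[R] E}

theorem comp_linearEquiv (hi : IsInjectiveEnvelope R i) (e : E ≃ₗ[R] E') :
    IsInjectiveEnvelope R (e.toLinearMap ∘ₗ i) := by
  obtain ⟨hinj, hmono, hess⟩ := hi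
  refine ⟨((Module.Baer.of_injective hinj).of_equiv e).injective, e.injective.comp hmono,
    fun N hN ↦ ?_⟩
  have := hess (N.map e.symm.toLinearMap) (by simpa using hN)
  contrapose! this
  simpa [Submodule.map_inf _ e.symm.injective, LinearMap.range_comp, ← Submodule.map_comp]
    using congrArg (Submodule.map e.symm.toLinearMap) this

theorem of_range_le {M' : Type u} [AddCommGroup M'] [Module R M'] (hi : IsInjectiveEnvelope R i)
    {j : M' →ₗ[R] E} (hj : Function.Injective j) (hij : LinearMap.range i ≤ LinearMap.range j) :
    IsInjectiveEnvelope R j :=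
  ⟨hi.1, hj, fun N hN h ↦ hi.2.2 N hN (eq_bot_iff.mpr (h ▸ inf_le_inf_left N hij))⟩

end IsInjectiveEnvelope

theorem range_ringLmapEquivSelf_symm_comp_le_range_lcomp_mkQ {E : Type u} [AddCommGroup E]
    [Module R E] (I : Ideal R) (j : R ⧸ I →ₗ[R] E) :
    LinearMap.range ((LinearMap.ringLmapEquivSelf R R E).symm.toLinearMap ∘ₗ j) ≤
      LinearMap.range (LinearMap.lcomp R E I.mkQ) := by
  rintro _ ⟨z, rfl⟩
  refine ⟨j ∘ₗ LinearMap.mulRight R z, LinearMap.ext fun x ↦ ?_⟩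
  simp only [LinearMap.lcomp_apply', LinearMap.comp_apply, Submodule.mkQ_apply,
    LinearMap.mulRight_apply, LinearEquiv.coe_coe, LinearMap.ringLmapEquivSelf_symm_apply,
    LinearMap.smulRight_apply, Module.End.one_apply]
  rw [← map_smul, Algebra.smul_def]
  rfl

theorem IsInjectiveEnvelope.lcomp_mkQ {E : Type u} [AddCommGroup E] [Module R E] {I : Ideal R}
    {j : R ⧸ I →ₗ[R] E} (hj : IsInjectiveEnvelope R j) :
    IsInjectiveEnvelope R (LinearMap.lcomp R E I.mkQ) :=
  (hj.comp_linearEquiv (LinearMap.ringLmapEquivSelf R R E).symm).of_range_le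
    (LinearMap.lcomp_injective_of_surjective _ I.mkQ_surjective)
    (range_ringLmapEquivSelf_symm_comp_le_range_lcomp_mkQ I j)

end

/-- Let `(R, 𝔪)` be a Noetherian local ring that is not `𝔪`-adically
complete, with residue field `k = R/𝔪`.  Then the quotient map `f : R → k` is not a
flat cover, but its Matlis dual `f^∨ : k^∨ → R^∨` is an injective envelope.  Here
`E(k)` is presented by an injective envelope `jk : R/𝔪 → Ek`. -/
theorem quotient_map_not_flatCover_but_dual_injectiveEnvelope
    [IsLocalRing R] [IsNoetherianRing R]
    (Ek : Type u) [AddCommGroup Ek] [Module R Ek]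
    (jk : (R ⧸ IsLocalRing.maximalIdeal R) →ₗ[R] Ek) (hjk : IsInjectiveEnvelope R jk)
    (hR : ¬ IsAdicComplete (IsLocalRing.maximalIdeal R) R) :
    ¬ IsFlatCover R (IsLocalRing.maximalIdeal R).mkQ ∧
      IsInjectiveEnvelope R (LinearMap.lcomp R Ek (IsLocalRing.maximalIdeal R).mkQ) :=
  ⟨fun h ↦ hR (isAdicComplete_of_isFlatCover_mkQ _ h), hjk.lcomp_mkQ⟩
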